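/- arXiv:2111.01647 — 5 statements merged into one kernel-verified Lean document; each statement's English description precedes it below -/
import Mathlib

section
/- Let x ∈ ℝ^{|K|−1} be a point of differentiability of f := v^e∘T. Then there exist σ ∈ Δ(I) and τ ∈ Δ(J) such that, writing w = (σ M^k τ)_{k∈K} ∈ ℝ^K for the row vector of payoffs of (σ,τ) in each state: (A) ∇f(x) = w S (pre-multiplication of the matrix S by the row vector w), and (B) w · T(x) = f(x). -/
open scoped BigOperators
open Finset

noncomputable section

/-- Value of the zero-sum matrix game with payoff matrix `M`:
`min_{t ∈ Δ(J)} max_{s ∈ Δ(I)} s M t`. -/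
def matrixValue {I J : Type*} [Fintype I] [Fintype J] (M : I → J → ℝ) : ℝ :=
  ⨅ t : (stdSimplex ℝ J), ⨆ s : (stdSimplex ℝ I),
    ∑ i, ∑ j, (s : I → ℝ) i * M i j * (t : J → ℝ) j

/-- The non-revealing value function `v^e(q)`, defined on all of `ℝ^K`. -/
def ve {K I J : Type*} [Fintype K] [Fintype I] [Fintype J]
    (M : K → I → J → ℝ) (q : K → ℝ) : ℝ :=
  matrixValue (fun i j => ∑ k, q k * M k i j)

/-- The concavification `Cav(v)(p)`: pointwise smallest concave majorant of `v` on the simplex. -/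
def cav {K : Type*} [Fintype K] (v : (K → ℝ) → ℝ) (p : K → ℝ) : ℝ :=
  sInf { y : ℝ | ∃ g : (K → ℝ) → ℝ,
    ConcaveOn ℝ (stdSimplex ℝ K) g ∧ (∀ q ∈ stdSimplex ℝ K, v q ≤ g q) ∧ y = g p }

/-- The affine parametrization `T : ℝ^{|K|-1} → ℝ^K`, `T 0 = e₁`, `T eᵢ = e_{i+1}`. -/
def Tmap (n : ℕ) (x : Fin n → ℝ) : Fin (n + 1) → ℝ :=
  Fin.cons (1 - ∑ i, x i) x

/-- The inverse of `T` on the affine hull of the simplex. -/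
def Tinv {n : ℕ} (p : Fin (n + 1) → ℝ) : Fin n → ℝ := fun i => p i.succ

/-- Pre-multiplication of the matrix `S` (linear part of `T`) by the row vector `φ`. -/
def rowS (n : ℕ) (φ : Fin (n + 1) → ℝ) : Fin n → ℝ := fun i => φ i.succ - φ 0

/-- Gradient of `f : ℝⁿ → ℝ` as a vector. -/
def grad {n : ℕ} (f : (Fin n → ℝ) → ℝ) (x : Fin n → ℝ) : Fin n → ℝ :=
  fun i => fderiv ℝ f x (Pi.single i 1)

/-- Clarke generalized gradient of `f` at `x`. -/
def clarkeGrad {n : ℕ} (f : (Fin n → ℝ) → ℝ) (x : Fin n → ℝ) : Set (Fin n → ℝ) :=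
  convexHull ℝ { L : Fin n → ℝ | ∃ u : ℕ → Fin n → ℝ,
    (∀ m, DifferentiableAt ℝ f (u m)) ∧
    Filter.Tendsto u Filter.atTop (nhds x) ∧
    Filter.Tendsto (fun m => grad f (u m)) Filter.atTop (nhds L) }

/-- The restricted superdifferential `∂*Cav(v)(p)`. -/
def restrictedSuperdiff {n : ℕ} (Cv : (Fin (n + 1) → ℝ) → ℝ) (p : Fin (n + 1) → ℝ) :
    Set (Fin n → ℝ) :=
  { w | ∀ h : Fin n → ℝ, Tmap n (Tinv p + h) ∈ stdSimplex ℝ (Fin (n + 1)) →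
      Cv (Tmap n (Tinv p + h)) ≤ Cv p + ∑ i, w i * h i }

/-- Property `NR` at `p⁰`. -/
def propNR {n : ℕ} {I J : Type*} [Fintype I] [Fintype J]
    (M : Fin (n + 1) → I → J → ℝ) (p0 : Fin (n + 1) → ℝ) : Prop :=
  ∃ p ∈ stdSimplex ℝ (Fin (n + 1)), ∃ φ : Fin (n + 1) → ℝ,
    (cav (ve M) p = ve M p ∧ ve M p = ∑ k, φ k * p k ∧
      cav (ve M) p0 = ∑ k, φ k * p0 k) ∧
    rowS n φ ∈ clarkeGrad (fun x => ve M (Tmap n x)) (Tinv p) ∧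
    rowS n φ ∈ restrictedSuperdiff (cav (ve M)) p

/-- The set `F` of feasible payoff vectors. -/
def Fset {K I J : Type*} [Fintype K] [Fintype I] [Fintype J]
    (M : K → I → J → ℝ) : Set (K → ℝ) :=
  convexHull ℝ { w : K → ℝ | ∃ i : I, ∃ j : J, w = fun k => M k i j }

/-- The set of non-revealing equilibrium payoffs `NR(p⁰)`. -/
def NRset {K I J : Type*} [Fintype K] [Fintype I] [Fintype J]
    (M : K → I → J → ℝ) (p0 : K → ℝ) : Set (K → ℝ) :=
  { φ | (∀ q ∈ stdSimplex ℝ K, ve M q ≤ ∑ k, φ k * q k) ∧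
        (∑ k, φ k * p0 k = cav (ve M) p0) ∧ φ ∈ Fset M }

/-- The game is locally non-revealing at `p`. -/
def locallyNR {K I J : Type*} [Fintype K] [Fintype I] [Fintype J]
    (M : K → I → J → ℝ) (p : K → ℝ) : Prop :=
  ∃ m : ℕ, ∃ α : Fin m → ℝ, ∃ ps : Fin m → K → ℝ,
    (∀ i, 0 < α i) ∧ (∑ i, α i = 1) ∧ (∀ i, ps i ∈ stdSimplex ℝ K) ∧
    (∑ i, α i • ps i = p) ∧ (cav (ve M) p = ∑ i, α i * ve M (ps i)) ∧
    (∃ i₀, ∀ k, 0 < ps i₀ k)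

end

/-!
Fix an optimal strategy `τ` of the minimizer in the game `M(T x)`. Each pure row `i` then gives
an affine function `y ↦ (M^k_i τ)_k · T y`; `f` lies below their maximum everywhere and touches
it at `x`. A function differentiable at a point where it touches a finite maximum of affine
functions from below has its gradient in the convex hull of the gradients of the active pieces:
Fermat's rule on the cone where one active piece dominates bounds every directional derivative,
and Hahn–Banach separation turns these bounds into convex weights `σ`. Activity of the pieces
charged by `σ` is (B).
-/

open Filter Topology

section MatrixGame

variable {I J : Type*} [Fintype I] [Fintype J]

lemma dotProduct_le_sup'_of_mem_stdSimplex [Nonempty I] {s : I → ℝ} (hs : s ∈ stdSimplex ℝ I)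
    (c : I → ℝ) : s ⬝ᵥ c ≤ univ.sup' univ_nonempty c :=
  calc s ⬝ᵥ c ≤ ∑ i, s i * univ.sup' univ_nonempty c :=
        sum_le_sum fun i _ => mul_le_mul_of_nonneg_left (le_sup' c (mem_univ i)) (hs.1 i)
    _ = univ.sup' univ_nonempty c := by rw [← sum_mul, hs.2, one_mul]

lemma iSup_stdSimplex_dotProduct [Nonempty I] (c : I → ℝ) :
    ⨆ s : stdSimplex ℝ I, (s : I → ℝ) ⬝ᵥ c = univ.sup' univ_nonempty c := by
  classical
  obtain ⟨i, -, hi⟩ := exists_mem_eq_sup' univ_nonempty c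
  refine le_antisymm (ciSup_le fun s => dotProduct_le_sup'_of_mem_stdSimplex s.2 c) ?_
  calc univ.sup' univ_nonempty c = (Pi.single i 1 : I → ℝ) ⬝ᵥ c := by simp [hi]
    _ ≤ _ := le_ciSup (f := fun s : stdSimplex ℝ I => (s : I → ℝ) ⬝ᵥ c)
        ⟨_, Set.forall_mem_range.2 fun s => dotProduct_le_sup'_of_mem_stdSimplex s.2 c⟩
        ⟨_, single_mem_stdSimplex ℝ i⟩

lemma matrixValue_eq_iInf_sup' [Nonempty I] (A : I → J → ℝ) :
    matrixValue A = ⨅ t : stdSimplex ℝ J, univ.sup' univ_nonempty fun i => A i ⬝ᵥ t := by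
  simp_rw [matrixValue, ← iSup_stdSimplex_dotProduct]
  simp [dotProduct, mul_sum, mul_assoc]

lemma continuous_sup'_dotProduct [Nonempty I] (A : I → J → ℝ) :
    Continuous fun t : J → ℝ => univ.sup' univ_nonempty fun i => A i ⬝ᵥ t :=
  Continuous.finset_sup'_apply _ fun _ _ => continuous_const.dotProduct continuous_id

theorem exists_matrixValue_le_dotProduct [Nonempty I] {t : J → ℝ} (ht : t ∈ stdSimplex ℝ J)
    (A : I → J → ℝ) : ∃ i, matrixValue A ≤ A i ⬝ᵥ t := by
  obtain ⟨i, -, hi⟩ := exists_mem_eq_sup' univ_nonempty fun i => A i ⬝ᵥ t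
  have hbdd := (isCompact_stdSimplex ℝ J).bddBelow_image (continuous_sup'_dotProduct A).continuousOn
  rw [Set.image_eq_range] at hbdd
  refine ⟨i, ?_⟩
  rw [← hi, matrixValue_eq_iInf_sup']
  exact ciInf_le hbdd (⟨t, ht⟩ : stdSimplex ℝ J)

theorem exists_mem_stdSimplex_dotProduct_le_matrixValue [Nonempty I] [Nonempty J]
    (A : I → J → ℝ) : ∃ τ ∈ stdSimplex ℝ J, ∀ i, A i ⬝ᵥ τ ≤ matrixValue A := by
  classical
  obtain ⟨τ, hτ, hmin⟩ := (isCompact_stdSimplex ℝ J).exists_isMinOn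
    (⟨_, single_mem_stdSimplex ℝ (Classical.arbitrary J)⟩ : (stdSimplex ℝ J).Nonempty)
    (continuous_sup'_dotProduct A).continuousOn
  refine ⟨τ, hτ, fun i => (le_sup' (fun i => A i ⬝ᵥ τ) (mem_univ i)).trans ?_⟩
  rw [matrixValue_eq_iInf_sup']
  exact le_ciInf fun t => hmin t.2

end MatrixGame

theorem HasFDerivAt.exists_apply_le_of_le_max_affine {E ι : Type*} [NormedAddCommGroup E]
    [NormedSpace ℝ E] [Finite ι] {f : E → ℝ} {f' : E →L[ℝ] ℝ} {x : E} (hf : HasFDerivAt f f' x)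
    (b : ι → ℝ) (ℓ : ι → E →L[ℝ] ℝ) (hle : ∀ y, ∃ i, f y ≤ b i + ℓ i y)
    (hx : ∀ i, b i + ℓ i x ≤ f x) (d : E) : ∃ i, b i + ℓ i x = f x ∧ f' d ≤ ℓ i d := by
  obtain ⟨i, hi, hmax⟩ : ∃ i ∈ {i | b i + ℓ i x = f x}, ∀ j ∈ {i | b i + ℓ i x = f x},
      ℓ j d ≤ ℓ i d := by
    obtain ⟨j, hj⟩ := hle x
    exact Set.exists_max_image _ _ (Set.toFinite _) ⟨j, (hx j).antisymm hj⟩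
  set C := {y | ∀ j, b j + ℓ j x = f x → ℓ j (y - x) ≤ ℓ i (y - x)}
  have hnear : ∀ᶠ y in 𝓝 x, ∀ j, b j + ℓ j x < f x → b j + ℓ j y < f x + ℓ i (y - x) := by
    refine eventually_all.2 fun j => ?_
    by_cases hj : b j + ℓ j x < f x
    · exact (ContinuousAt.eventually_lt (by fun_prop) (by fun_prop) (by simpa using hj)).mono
        fun y hy _ => hy
    · exact Eventually.of_forall fun y h => absurd h hj
  have hloc : IsLocalMaxOn (fun y => f y - ℓ i y) C x := by
    filter_upwards [nhdsWithin_le_nhds hnear, self_mem_nhdsWithin] with y hy hyC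
    obtain ⟨j, hj⟩ := hle y
    have : b j + ℓ j y ≤ f x + ℓ i (y - x) := by
      rcases (hx j).lt_or_eq with hlt | heq
      · exact (hy j hlt).le
      · have := hyC j heq
        simp only [map_sub] at this ⊢
        linarith
    simp only [map_sub] at this
    linarith
  have hd : d ∈ posTangentConeAt C x := by
    refine mem_posTangentConeAt_of_frequently_mem (Eventually.frequently ?_)
    filter_upwards [self_mem_nhdsWithin] with t (ht : 0 < t) j hj
    simpa using mul_le_mul_of_nonneg_left (hmax j hj) ht.le
  refine ⟨i, hi, sub_nonpos.1 ?_⟩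
  exact hloc.hasFDerivWithinAt_nonpos (hf.sub (ℓ i).hasFDerivAt).hasFDerivWithinAt hd

theorem exists_mem_stdSimplex_eq_sum_smul_of_forall_exists_dotProduct_le {ι κ : Type*}
    [Fintype ι] [Fintype κ] (p : ι → Prop) (g : ι → κ → ℝ) (v : κ → ℝ)
    (h : ∀ d, ∃ i, p i ∧ v ⬝ᵥ d ≤ g i ⬝ᵥ d) :
    ∃ σ ∈ stdSimplex ℝ ι, (∀ i, σ i ≠ 0 → p i) ∧ v = ∑ i, σ i • g i := by
  classical
  set S := stdSimplex ℝ ι ∩ {σ | ∀ i, ¬ p i → σ i = 0}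
  set Φ := Fintype.linearCombination ℝ g
  suffices v ∈ Φ '' S by
    obtain ⟨σ, ⟨hσ, hσp⟩, rfl⟩ := this
    exact ⟨σ, hσ, fun i hi => not_not.1 (mt (hσp i) hi), rfl⟩
  have hSconv : Convex ℝ S := (convex_stdSimplex ℝ ι).inter
    fun σ hσ τ hτ a b _ _ _ i hi => by simp [hσ i hi, hτ i hi]
  have hScomp : IsCompact S := (isCompact_stdSimplex ℝ ι).inter_right <| by
    simp only [Set.ofPred_forall]
    exact isClosed_iInter fun i => isClosed_iInter fun _ =>
      isClosed_eq (continuous_apply i) continuous_const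
  by_contra hv
  obtain ⟨ℓ, u, hlt, hgt⟩ := geometric_hahn_banach_closed_point (hSconv.linear_image Φ)
    (hScomp.image Φ.continuous_of_finiteDimensional).isClosed hv
  set d : κ → ℝ := fun j => ℓ (Pi.single j 1)
  have hℓ : ∀ w, ℓ w = w ⬝ᵥ d := fun w => by
    conv_lhs => rw [pi_eq_sum_univ' w]
    simp [dotProduct, d]
  obtain ⟨i, hi, hvi⟩ := h d
  have hgi : g i ∈ Φ '' S := ⟨Pi.single i 1, ⟨single_mem_stdSimplex ℝ i,
    fun j hj => Pi.single_eq_of_ne (by rintro rfl; exact hj hi) 1⟩, by simp [Φ]⟩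
  have := hlt _ hgi
  rw [hℓ] at this hgt
  linarith

lemma fderiv_apply_eq_grad_dotProduct {n : ℕ} (f : (Fin n → ℝ) → ℝ) (x d : Fin n → ℝ) :
    fderiv ℝ f x d = grad f x ⬝ᵥ d := by
  conv_lhs => rw [pi_eq_sum_univ' d]
  simp [dotProduct, grad, mul_comm]

theorem DifferentiableAt.exists_grad_eq_sum_smul_of_le_max_affine {n : ℕ} {ι : Type*}
    [Fintype ι] {f : (Fin n → ℝ) → ℝ} {x : Fin n → ℝ} (hf : DifferentiableAt ℝ f x)
    (b : ι → ℝ) (g : ι → Fin n → ℝ) (hle : ∀ y, ∃ i, f y ≤ b i + g i ⬝ᵥ y)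
    (hx : ∀ i, b i + g i ⬝ᵥ x ≤ f x) :
    ∃ σ ∈ stdSimplex ℝ ι, (∀ i, σ i ≠ 0 → b i + g i ⬝ᵥ x = f x) ∧ grad f x = ∑ i, σ i • g i := by
  let ℓ i : (Fin n → ℝ) →L[ℝ] ℝ := LinearMap.toContinuousLinearMap (dotProductBilin ℝ ℝ (g i))
  refine exists_mem_stdSimplex_eq_sum_smul_of_forall_exists_dotProduct_le _ g _ fun d => ?_
  obtain ⟨i, hi, hd⟩ := hf.hasFDerivAt.exists_apply_le_of_le_max_affine b ℓ
    (by simpa [ℓ] using hle) (by simpa [ℓ] using hx) d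
  exact ⟨i, by simpa [ℓ] using hi, by simpa [ℓ, fderiv_apply_eq_grad_dotProduct] using hd⟩

lemma sum_mul_dotProduct_eq_dotProduct {K I J : Type*} [Fintype K] [Fintype J]
    (M : K → I → J → ℝ) (q : K → ℝ) (i : I) (τ : J → ℝ) :
    (fun j => ∑ k, q k * M k i j) ⬝ᵥ τ = (fun k => M k i ⬝ᵥ τ) ⬝ᵥ q := by
  simp only [dotProduct, sum_mul]
  rw [sum_comm]
  exact sum_congr rfl fun _ _ => sum_congr rfl fun _ _ => by ring

lemma dotProduct_Tmap {n : ℕ} (φ : Fin (n + 1) → ℝ) (y : Fin n → ℝ) :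
    φ ⬝ᵥ Tmap n y = φ 0 + rowS n φ ⬝ᵥ y := by
  simp only [dotProduct, Tmap, rowS, Fin.sum_univ_succ, Fin.cons_zero, Fin.cons_succ, mul_sub,
    sub_mul, mul_one, mul_sum, sum_sub_distrib]
  ring

lemma rowS_sum_smul {n : ℕ} {ι : Type*} [Fintype ι] (σ : ι → ℝ) (φ : ι → Fin (n + 1) → ℝ) :
    rowS n (∑ i, σ i • φ i) = ∑ i, σ i • rowS n (φ i) := by
  ext m
  simp [rowS, mul_sub, sum_sub_distrib]

/-- at any differentiability point `x` of `f = v^e ∘ T` there are mixed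
actions `σ ∈ Δ(I)`, `τ ∈ Δ(J)` with (A) `∇f(x) = w S` and (B) `w · T(x) = f(x)`,
where `w = (σ M^k τ)_{k∈K}`. -/
theorem stmt_1 {n : ℕ} {I J : Type*} [Fintype I] [Fintype J] [Nonempty I] [Nonempty J]
    (M : Fin (n + 1) → I → J → ℝ) (x : Fin n → ℝ)
    (hdiff : DifferentiableAt ℝ (fun y : Fin n → ℝ => ve M (Tmap n y)) x) :
    ∃ σ ∈ stdSimplex ℝ I, ∃ τ ∈ stdSimplex ℝ J,
      grad (fun y : Fin n → ℝ => ve M (Tmap n y)) x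
          = rowS n (fun k => ∑ i, ∑ j, σ i * M k i j * τ j) ∧
      ∑ k, (∑ i, ∑ j, σ i * M k i j * τ j) * Tmap n x k = ve M (Tmap n x) := by
  obtain ⟨τ, hτ, hτopt⟩ :=
    exists_mem_stdSimplex_dotProduct_le_matrixValue fun i j => ∑ k, Tmap n x k * M k i j
  set c : I → Fin (n + 1) → ℝ := fun i k => M k i ⬝ᵥ τ
  have hpiece : ∀ y i, (fun j => ∑ k, Tmap n y k * M k i j) ⬝ᵥ τ = c i 0 + rowS n (c i) ⬝ᵥ y :=
    fun y i => by rw [sum_mul_dotProduct_eq_dotProduct, dotProduct_Tmap]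
  obtain ⟨σ, hσ, hactive, hgrad⟩ := hdiff.exists_grad_eq_sum_smul_of_le_max_affine
    (fun i => c i 0) (fun i => rowS n (c i))
    (fun y => (exists_matrixValue_le_dotProduct hτ _).imp fun i hi => hi.trans_eq (hpiece y i))
    (fun i => (hpiece x i).symm.trans_le (hτopt i))
  have hw : (fun k => ∑ i, ∑ j, σ i * M k i j * τ j) = ∑ i, σ i • c i := by
    ext k
    simp [c, dotProduct, mul_sum, mul_assoc]
  refine ⟨σ, hσ, τ, hτ, by rw [hgrad, hw, rowS_sum_smul], ?_⟩
  change (fun k => ∑ i, ∑ j, σ i * M k i j * τ j) ⬝ᵥ Tmap n x = _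
  rw [hw]
  calc (∑ i, σ i • c i) ⬝ᵥ Tmap n x = ∑ i, σ i * (c i 0 + rowS n (c i) ⬝ᵥ x) := by
        simp [sum_dotProduct, dotProduct_Tmap]
    _ = ∑ i, σ i * ve M (Tmap n x) := sum_congr rfl fun i _ => by
        by_cases h : σ i = 0
        · simp [h]
        · rw [hactive i h]
    _ = ve M (Tmap n x) := by rw [← sum_mul, hσ.2, one_mul]
end

section
/- Let v : Δ(K) → ℝ be continuous, p⁰ ∈ Δ(K), and suppose Cav(v)(p⁰) = Σ_{s=1}^m λ_s v(p_s) for some λ_s > 0 with Σ_{s=1}^m λ_s = 1 and p_s ∈ Δ(K) with Σ_{s=1}^m λ_s p_s = p⁰, where p_{s₀} ∈ int Δ(K) for some s₀. Then there exists φ ∈ ℝ^K such that φ·q ≥ v(q) for all q ∈ Δ(K), φ·p⁰ = Cav(v)(p⁰), and φ·p_s = v(p_s) for every s = 1,…,m. -/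
/-!
Every point `(p⁰, y)` of the convex hull `C` of the graph of `v` over `Δ(K)` satisfies
`y ≤ Cav(v)(p⁰)`. Thickening `C` along the direction `𝟙` (transversal to the hyperplane
`∑ q = 1`) and downwards gives a convex set with nonempty interior near `p⁰`, because `p⁰` is
interior to `Δ(K)`; `(p⁰, Cav(v)(p⁰))` is on its boundary. The supporting hyperplane there is
not vertical, so it is the graph of a linear `φ` with `φ ≥ v` on `Δ(K)` and
`φ·p⁰ = Cav(v)(p⁰)`. Finally `∑ λ_s φ·p_s = φ·p⁰ = ∑ λ_s v(p_s)` with `φ·p_s ≥ v(p_s)` and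
`λ_s > 0` forces `φ·p_s = v(p_s)` for every `s`.
-/

open scoped BigOperators
open Finset

open Filter Topology
open scoped Pointwise

section Separation

variable {E : Type*} [NormedAddCommGroup E] [NormedSpace ℝ E]

theorem ContinuousLinearMap.apply_prod_eq (f : E × ℝ →L[ℝ] ℝ) (x : E) (y : ℝ) :
    f (x, y) = f (x, 0) + y * f (0, 1) := by
  rw [← smul_eq_mul, ← map_smul, ← map_add, Prod.smul_mk, smul_zero, smul_eq_mul, mul_one,
    Prod.mk_add_mk, add_zero, zero_add]

theorem ContinuousLinearMap.apply_zero_one_pos {f : E × ℝ →L[ℝ] ℝ} (hf0 : f ≠ 0) {U : Set E}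
    {x₀ : E} (hU : U ∈ 𝓝 x₀) {m c : ℝ} (hf : ∀ p ∈ U ×ˢ Set.Iio m, f p ≤ f (x₀, c)) :
    0 < f (0, 1) := by
  have hfU : ∀ x ∈ U, ∀ y < m, f (x, 0) + y * f (0, 1) ≤ f (x₀, 0) + c * f (0, 1) :=
    fun x hx y hy => by
      rw [← f.apply_prod_eq, ← f.apply_prod_eq]
      exact hf _ (Set.mk_mem_prod hx hy)
  rcases lt_trichotomy (f (0, 1)) 0 with ha | ha | ha
  · have := hfU x₀ (mem_of_mem_nhds hU) (min m c - 1) (by linarith [min_le_left m c])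
    nlinarith [min_le_right m c]
  · have hmax : IsLocalMax (f.comp (.inl ℝ E ℝ)) x₀ :=
      Filter.mem_of_superset hU fun x hx => by
        simpa [ha] using hfU x hx (m - 1) (by linarith)
    have hinl := hmax.hasFDerivAt_eq_zero (f.comp (.inl ℝ E ℝ)).hasFDerivAt
    refine absurd (ContinuousLinearMap.ext fun ⟨x, y⟩ => ?_) hf0
    simpa [f.apply_prod_eq x y, ha] using congrArg (· x) hinl
  · exact ha

theorem Convex.exists_clm_add_le_of_prod_Iio_subset {D : Set (E × ℝ)} (hD : Convex ℝ D)
    {U : Set E} {x₀ : E} (hU : U ∈ 𝓝 x₀) {m c : ℝ} (hUD : U ×ˢ Set.Iio m ⊆ D)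
    (hc : ∀ y, (x₀, y) ∈ D → y ≤ c) :
    ∃ ℓ : E →L[ℝ] ℝ, ∀ p ∈ D, ℓ p.1 + p.2 ≤ ℓ x₀ + c := by
  have hint : (x₀, m - 1) ∈ interior D :=
    interior_mono hUD (mem_interior_iff_mem_nhds.2 (prod_mem_nhds hU (Iio_mem_nhds (by linarith))))
  have hnot : (x₀, c) ∉ interior D := by
    intro h
    have hev : ∀ᶠ y in 𝓝[>] c, (x₀, y) ∈ interior D := nhdsWithin_le_nhds <|
      (Continuous.prodMk_right x₀).continuousAt.preimage_mem_nhds (isOpen_interior.mem_nhds h)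
    obtain ⟨y, hyD, hcy⟩ := (hev.and self_mem_nhdsWithin).exists
    exact (hc y (interior_subset hyD)).not_gt hcy
  obtain ⟨f, hf0, hf⟩ := geometric_hahn_banach_of_nonempty_interior_point hD hnot ⟨_, hint⟩
  have ha := f.apply_zero_one_pos hf0 hU fun p hp => hf p (hUD hp)
  refine ⟨(f (0, 1))⁻¹ • f.comp (.inl ℝ E ℝ), fun ⟨x, y⟩ hp => ?_⟩
  have := hf _ hp
  rw [f.apply_prod_eq x, f.apply_prod_eq x₀] at this
  show (f (0, 1))⁻¹ * f (x, 0) + y ≤ (f (0, 1))⁻¹ * f (x₀, 0) + c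
  rw [← mul_le_mul_iff_of_pos_left ha]
  field_simp
  linarith

end Separation

section StdSimplex

variable {K : Type*} [Fintype K]

local notation "ℝ𝟙" => ((ℝ ∙ (1 : K → ℝ) : Submodule ℝ (K → ℝ)) : Set (K → ℝ))

theorem card_pos_of_mem_stdSimplex {p : K → ℝ} (hp : p ∈ stdSimplex ℝ K) :
    0 < Fintype.card K := by
  rcases isEmpty_or_nonempty K with _ | _
  · simpa using hp.2
  · exact Fintype.card_pos

theorem stdSimplex_add_span_one_mem_nhds {p : K → ℝ} (hp : p ∈ stdSimplex ℝ K)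
    (hpos : ∀ k, 0 < p k) : stdSimplex ℝ K + ℝ𝟙 ∈ 𝓝 p := by
  have hcard : (0 : ℝ) < Fintype.card K := mod_cast card_pos_of_mem_stdSimplex hp
  set π : (K → ℝ) → K → ℝ := fun x => x - ((∑ k, x k - 1) / Fintype.card K) • 1
  have hπp : π p = p := by simp [π, hp.2]
  have hπ : Continuous π := by fun_prop
  have hev : ∀ᶠ x in 𝓝 p, ∀ k, 0 < π x k := eventually_all.2 fun k =>
    (((continuous_apply k).comp hπ).tendsto p).eventually_const_lt (by simpa [hπp] using hpos k)
  refine hev.mono fun x hx => ⟨π x, ⟨fun k => (hx k).le, ?_⟩, _,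
    Submodule.mem_span_singleton.2 ⟨_, rfl⟩, sub_add_cancel _ _⟩
  simp only [π, Pi.sub_apply, Pi.smul_apply, Pi.one_apply, smul_eq_mul, mul_one,
    Finset.sum_sub_distrib, Finset.sum_const, Finset.card_univ, nsmul_eq_mul]
  field_simp
  ring

theorem mk_sum_mem_convexHull_graphOn [DecidableEq K] (v : (K → ℝ) → ℝ) {q : K → ℝ}
    (hq : q ∈ stdSimplex ℝ K) :
    (q, ∑ k, q k * v (Pi.single k 1)) ∈ convexHull ℝ ((stdSimplex ℝ K).graphOn v) := by
  have : (q, ∑ k, q k * v (Pi.single k 1)) = ∑ k, q k • (Pi.single k 1, v (Pi.single k 1)) := by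
    ext <;> simp [Prod.fst_sum, Prod.snd_sum, Pi.single_apply]
  rw [this]
  exact (convex_convexHull ℝ _).sum_mem (fun k _ => hq.1 k) hq.2
    fun k _ => subset_convexHull ℝ _ ⟨_, single_mem_stdSimplex ℝ k, rfl⟩

theorem exists_prod_Iio_subset_convexHull_graphOn_add [DecidableEq K] (v : (K → ℝ) → ℝ) :
    ∃ m, (stdSimplex ℝ K + ℝ𝟙) ×ˢ Set.Iio m ⊆
      convexHull ℝ ((stdSimplex ℝ K).graphOn v) + ℝ𝟙 ×ˢ Set.Iic 0 := by
  obtain ⟨m, hm⟩ := (Set.finite_range fun k => v (Pi.single k 1)).bddBelow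
  refine ⟨m, ?_⟩
  rintro ⟨_, y⟩ ⟨⟨q, hq, w, hw, rfl⟩, hy⟩
  have hmq : m ≤ ∑ k, q k * v (Pi.single k 1) := calc
    m = ∑ k, q k * m := by rw [← Finset.sum_mul, hq.2, one_mul]
    _ ≤ _ := Finset.sum_le_sum fun k _ => mul_le_mul_of_nonneg_left (hm ⟨k, rfl⟩) (hq.1 k)
  exact ⟨_, mk_sum_mem_convexHull_graphOn v hq, (w, y - ∑ k, q k * v (Pi.single k 1)),
    ⟨hw, by simp only [Set.mem_Iic]; linarith [Set.mem_Iio.1 hy]⟩, by simp⟩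

theorem exists_le_of_mk_mem_convexHull_graphOn_add {v : (K → ℝ) → ℝ} {p : K → ℝ}
    (hp : p ∈ stdSimplex ℝ K) {y : ℝ}
    (h : (p, y) ∈ convexHull ℝ ((stdSimplex ℝ K).graphOn v) + ℝ𝟙 ×ˢ Set.Iic 0) :
    ∃ z, (p, z) ∈ convexHull ℝ ((stdSimplex ℝ K).graphOn v) ∧ y ≤ z := by
  obtain ⟨⟨q, z⟩, hqz, ⟨_, y'⟩, ⟨hw, hy'⟩, heq⟩ := h
  obtain ⟨t, rfl⟩ := Submodule.mem_span_singleton.1 hw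
  simp only [Prod.mk_add_mk, Prod.mk.injEq] at heq
  have hq : q ∈ stdSimplex ℝ K := (convexHull_min (t := stdSimplex ℝ K ×ˢ Set.univ)
    (fun x hx => ⟨(Set.mem_graphOn.1 hx).1, trivial⟩)
    ((convex_stdSimplex ℝ K).prod convex_univ) hqz).1
  have ht : t = 0 := by
    have := congrArg (fun x => ∑ k, x k) heq.1
    simpa [Finset.sum_add_distrib, hq.2, hp.2, (card_pos_of_mem_stdSimplex hp).ne'] using this
  subst ht
  simp only [zero_smul, add_zero] at heq
  obtain ⟨rfl, rfl⟩ := heq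
  exact ⟨z, hqz, by simp only [Set.mem_Iic] at hy'; linarith⟩

theorem exists_linear_majorant_of_forall_mem_convexHull_graphOn_le [DecidableEq K]
    {v : (K → ℝ) → ℝ} {p₀ : K → ℝ} (hp₀ : p₀ ∈ stdSimplex ℝ K) (hpos : ∀ k, 0 < p₀ k) {c : ℝ}
    (hc : ∀ y, (p₀, y) ∈ convexHull ℝ ((stdSimplex ℝ K).graphOn v) → y ≤ c) :
    ∃ φ : K → ℝ, (∀ q ∈ stdSimplex ℝ K, v q ≤ ∑ k, φ k * q k) ∧ ∑ k, φ k * p₀ k = c := by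
  obtain ⟨m, hm⟩ := exists_prod_Iio_subset_convexHull_graphOn_add v
  have hD : Convex ℝ (convexHull ℝ ((stdSimplex ℝ K).graphOn v) +
      ℝ𝟙 ×ˢ Set.Iic 0) :=
    (convex_convexHull ℝ _).add ((Submodule.convex _).prod (convex_Iic 0))
  obtain ⟨ℓ, hℓ⟩ := hD.exists_clm_add_le_of_prod_Iio_subset
    (stdSimplex_add_span_one_mem_nhds hp₀ hpos) hm fun y hy => by
      obtain ⟨z, hz, hyz⟩ := exists_le_of_mk_mem_convexHull_graphOn_add hp₀ hy
      exact hyz.trans (hc z hz)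
  have hφ : ∀ q ∈ stdSimplex ℝ K,
      ∑ k, (c + ℓ p₀ - ℓ (Pi.single k 1)) * q k = c + ℓ p₀ - ℓ q := fun q hq => by
    conv_rhs => rw [← Finset.univ_sum_single q, map_sum]
    simp only [sub_mul, Finset.sum_sub_distrib, ← Finset.mul_sum, hq.2, mul_one]
    congr 1
    refine Finset.sum_congr rfl fun k _ => ?_
    rw [mul_comm, ← smul_eq_mul, ← map_smul, ← Pi.single_smul, smul_eq_mul, mul_one]
  refine ⟨fun k => c + ℓ p₀ - ℓ (Pi.single k 1), fun q hq => ?_, by rw [hφ p₀ hp₀]; ring⟩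
  have := hℓ (q, v q) ⟨_, subset_convexHull ℝ _ ⟨q, hq, rfl⟩, 0,
    ⟨Submodule.zero_mem _, Set.self_mem_Iic⟩, add_zero _⟩
  rw [hφ q hq]
  linarith

end StdSimplex

theorem le_cav_of_mem_convexHull_graphOn {K : Type*} [Fintype K] {v : (K → ℝ) → ℝ}
    (hv : BddAbove (v '' stdSimplex ℝ K)) {p : K → ℝ} {y : ℝ}
    (h : (p, y) ∈ convexHull ℝ ((stdSimplex ℝ K).graphOn v)) : y ≤ cav v p := by
  obtain ⟨M, hM⟩ := hv
  refine le_csInf ⟨M, fun _ => M, concaveOn_const M (convex_stdSimplex ℝ K),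
    fun q hq => hM ⟨q, hq, rfl⟩, rfl⟩ ?_
  rintro _ ⟨g, hg, hvg, rfl⟩
  refine (convexHull_min (fun x hx => ?_) hg.convex_hypograph h).2
  obtain ⟨q, hq, rfl⟩ := hx
  exact ⟨hq, hvg q hq⟩

theorem stmt_5_general {K : Type*} [Fintype K]
    (v : (K → ℝ) → ℝ) (hv : ContinuousOn v (stdSimplex ℝ K))
    (p0 : K → ℝ) (hp0 : p0 ∈ stdSimplex ℝ K)
    (m : ℕ) (lam : Fin m → ℝ) (ps : Fin m → K → ℝ)
    (hlam : ∀ s, 0 < lam s)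
    (hps : ∀ s, ps s ∈ stdSimplex ℝ K)
    (hbary : ∑ s, lam s • ps s = p0)
    (hcav : cav v p0 = ∑ s, lam s * v (ps s))
    (s0 : Fin m) (hs0 : ∀ k, 0 < ps s0 k) :
    ∃ φ : K → ℝ, (∀ q ∈ stdSimplex ℝ K, v q ≤ ∑ k, φ k * q k) ∧
      (∑ k, φ k * p0 k = cav v p0) ∧
      (∀ s, ∑ k, φ k * ps s k = v (ps s)) := by
  classical
  have hpos : ∀ k, 0 < p0 k := fun k => by
    rw [← hbary, Finset.sum_apply]
    exact Finset.sum_pos' (fun s _ => smul_nonneg (hlam s).le ((hps s).1 k))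
      ⟨s0, Finset.mem_univ _, smul_pos (hlam s0) (hs0 k)⟩
  obtain ⟨φ, hφv, hφp0⟩ := exists_linear_majorant_of_forall_mem_convexHull_graphOn_le hp0 hpos
    fun y => le_cav_of_mem_convexHull_graphOn ((isCompact_stdSimplex ℝ K).bddAbove_image hv)
  refine ⟨φ, hφv, hφp0, fun s => ?_⟩
  have hsum : ∑ s, lam s * v (ps s) = ∑ s, lam s * ∑ k, φ k * ps s k := by
    rw [← hcav, ← hφp0, ← hbary]
    simp only [Finset.sum_apply, Pi.smul_apply, smul_eq_mul, Finset.mul_sum]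
    rw [Finset.sum_comm]
    exact Finset.sum_congr rfl fun _ _ => Finset.sum_congr rfl fun _ _ => by ring
  have hterm := (Finset.sum_eq_sum_iff_of_le fun s _ =>
    mul_le_mul_of_nonneg_left (hφv _ (hps s)) (hlam s).le).1 hsum s (Finset.mem_univ s)
  exact (mul_left_cancel₀ (hlam s).ne' hterm).symm

/-- supporting-hyperplane lemma. If `Cav(v)(p⁰) = Σ λ_s v(p_s)` with a
convex combination `Σ λ_s p_s = p⁰`, `λ_s > 0`, and some `p_{s₀}` interior, then there
is an affine functional `φ` majorizing `v` on `Δ(K)`, agreeing with `Cav(v)` at `p⁰`,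
and agreeing with `v` at every `p_s`. -/
theorem stmt_5 {K : Type*} [Fintype K]
    (v : (K → ℝ) → ℝ) (hv : ContinuousOn v (stdSimplex ℝ K))
    (p0 : K → ℝ) (hp0 : p0 ∈ stdSimplex ℝ K)
    (m : ℕ) (lam : Fin m → ℝ) (ps : Fin m → K → ℝ)
    (hlam : ∀ s, 0 < lam s) (hlamsum : ∑ s, lam s = 1)
    (hps : ∀ s, ps s ∈ stdSimplex ℝ K)
    (hbary : ∑ s, lam s • ps s = p0)
    (hcav : cav v p0 = ∑ s, lam s * v (ps s))
    (s0 : Fin m) (hs0 : ∀ k, 0 < ps s0 k) :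
    ∃ φ : K → ℝ, (∀ q ∈ stdSimplex ℝ K, v q ≤ ∑ k, φ k * q k) ∧
      (∑ k, φ k * p0 k = cav v p0) ∧
      (∀ s, ∑ k, φ k * ps s k = v (ps s)) :=
  stmt_5_general v hv p0 hp0 m lam ps hlam hps hbary hcav s0 hs0
end

section
/- Let (Ω, ℱ, ℙ) be a probability space with filtration (ℱ_t)_{t∈ℕ}. Let (p_t)_{t∈ℕ} be a Δ(K_A×K_B)-valued martingale with respect to (ℱ_t) with p_1 = p⁰ a.s. for a fixed p⁰ ∈ Δ(K_A×K_B), and let (β_{A,t})_{t∈ℕ} and (β_{B,t})_{t∈ℕ} be real-valued martingales with respect to (ℱ_t) such that for every t ∈ ℕ: β_{A,t} ≤ Cav(v_A)((p_t)_A) a.s. and β_{B,t} ≤ Cav(v_B)((p_t)_B) a.s., and such that β_{A,1} + β_{B,1} = Cav(v_A)(p⁰_A) + Cav(v_B)(p⁰_B) a.s. Then for each ℓ ∈ {A,B}, the process (Cav(v_ℓ)((p_t)_ℓ))_{t∈ℕ} is a martingale with respect to (ℱ_t). (This is the content of Theorem 4.1: for any equilibrium of the three-player repeated game paying ex-ante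 Cav(v_A)(p⁰_A) + Cav(v_B)(p⁰_B) to the informed player, the induced processes Cav(v_ℓ)(p_{tℓ}) are martingales.) -/
open scoped BigOperators
open Finset MeasureTheory

noncomputable section

/-- Marginal on `K_A` of a vector indexed by `K_A × K_B`. -/
def margA {KA KB : Type*} [Fintype KB] (q : KA × KB → ℝ) : KA → ℝ :=
  fun a => ∑ b, q (a, b)

/-- Marginal on `K_B` of a vector indexed by `K_A × K_B`. -/
def margB {KA KB : Type*} [Fintype KA] (q : KA × KB → ℝ) : KB → ℝ :=
  fun b => ∑ a, q (a, b)

end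

/-! Jensen's inequality for the concave function `Cav v_ℓ` along the martingale `p` gives
`E[Cav v_ℓ((p_t)_ℓ)] ≤ Cav v_ℓ(p⁰_ℓ)`, while the martingales `β_ℓ` keep their expectations, whose
sum is `Cav v_A(p⁰_A) + Cav v_B(p⁰_B)`. As `β_{ℓ,t} ≤ Cav v_ℓ((p_t)_ℓ)`, both inequalities are
equalities in expectation, so `Cav v_ℓ((p_t)_ℓ) = β_{ℓ,t}` almost surely for every `t`, and a
process that agrees at each time almost surely with a martingale is one.

Jensen's inequality needs `Cav v` continuous on the simplex; it is even Lipschitz. For `p, p'` in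
the simplex there is an affine self-map `T` of the simplex with `T p = p'` moving every `q` by at
most `m q`, for an affine `m` with `m p ≤ |K| ‖p - p'‖`; if `g` is a concave majorant of `v`, so is
`g ∘ T + L m`, whence `Cav v p ≤ Cav v p' + L |K| ‖p - p'‖`. -/

open Set

theorem exists_mul_eq_of_le {K : Type*} {c p : K → ℝ} (hc : 0 ≤ c) (hcp : c ≤ p) :
    ∃ σ : K → ℝ, (∀ k, 0 ≤ σ k) ∧ (∀ k, σ k ≤ 1) ∧ σ * p = c := by
  refine ⟨c / p, fun k ↦ div_nonneg (hc k) ((hc k).trans (hcp k)),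
    fun k ↦ div_le_one_of_le₀ (hcp k) ((hc k).trans (hcp k)), funext fun k ↦ ?_⟩
  rcases ((hc k).trans (hcp k)).eq_or_lt with h | h
  · simp [← h, le_antisymm (hcp k) (h ▸ hc k)]
  · exact div_mul_cancel₀ _ h.ne'

section Concavification

variable {K : Type*} [Fintype K] {v : (K → ℝ) → ℝ} {p : K → ℝ}

theorem cav_le_of_concaveOn (hp : p ∈ stdSimplex ℝ K) {g : (K → ℝ) → ℝ}
    (hg : ConcaveOn ℝ (stdSimplex ℝ K) g) (hvg : ∀ q ∈ stdSimplex ℝ K, v q ≤ g q) :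
    cav v p ≤ g p :=
  csInf_le ⟨v p, by rintro _ ⟨g, -, hvg, rfl⟩; exact hvg p hp⟩ ⟨g, hg, hvg, rfl⟩

theorem le_cav_of_forall_le {B : ℝ} (hB : ∀ q ∈ stdSimplex ℝ K, v q ≤ B) {y : ℝ}
    (hy : ∀ g : (K → ℝ) → ℝ, ConcaveOn ℝ (stdSimplex ℝ K) g →
      (∀ q ∈ stdSimplex ℝ K, v q ≤ g q) → y ≤ g p) :
    y ≤ cav v p :=
  le_csInf ⟨B, fun _ ↦ B, concaveOn_const B (convex_stdSimplex ℝ K), hB, rfl⟩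
    (by rintro _ ⟨g, hg, hvg, rfl⟩; exact hy g hg hvg)

theorem le_cav {B : ℝ} (hB : ∀ q ∈ stdSimplex ℝ K, v q ≤ B) (hp : p ∈ stdSimplex ℝ K) :
    v p ≤ cav v p :=
  le_cav_of_forall_le hB fun _ _ hvg ↦ hvg p hp

theorem cav_le {B : ℝ} (hB : ∀ q ∈ stdSimplex ℝ K, v q ≤ B) (hp : p ∈ stdSimplex ℝ K) :
    cav v p ≤ B :=
  cav_le_of_concaveOn hp (concaveOn_const B (convex_stdSimplex ℝ K)) hB

/-- Off the simplex a concave majorant may take any value, so the infimum is `sInf` of an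
unbounded set, i.e. `0`. -/
theorem cav_of_notMem {B : ℝ} (hB : ∀ q ∈ stdSimplex ℝ K, v q ≤ B) (hp : p ∉ stdSimplex ℝ K) :
    cav v p = 0 := by
  classical
  refine Real.sInf_of_not_bddBelow fun ⟨c, hc⟩ ↦ ?_
  let g : (K → ℝ) → ℝ := fun x ↦ if x ∈ stdSimplex ℝ K then B else c - 1
  have hg : ConcaveOn ℝ (stdSimplex ℝ K) g :=
    (concaveOn_const B (convex_stdSimplex ℝ K)).congr fun x hx ↦ by simp [g, hx]
  have : c ≤ c - 1 := hc ⟨g, hg, fun q hq ↦ by simpa [g, hq] using hB q hq, by simp [g, hp]⟩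
  linarith

theorem concaveOn_cav {B : ℝ} (hB : ∀ q ∈ stdSimplex ℝ K, v q ≤ B) :
    ConcaveOn ℝ (stdSimplex ℝ K) (cav v) := by
  refine ⟨convex_stdSimplex ℝ K, fun x hx y hy a b ha hb hab ↦ le_cav_of_forall_le hB ?_⟩
  intro g hg hvg
  calc a • cav v x + b • cav v y ≤ a • g x + b • g y := by
        gcongr <;> exact cav_le_of_concaveOn ‹_› hg hvg
    _ ≤ g (a • x + b • y) := hg.2 hx hy ha hb hab

theorem cav_le_cav_apply_add {B : ℝ} (hB : ∀ q ∈ stdSimplex ℝ K, v q ≤ B)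
    {T : (K → ℝ) →ᵃ[ℝ] (K → ℝ)} {m : (K → ℝ) →ᵃ[ℝ] ℝ}
    (hT : MapsTo T (stdSimplex ℝ K) (stdSimplex ℝ K))
    (hvT : ∀ q ∈ stdSimplex ℝ K, v q ≤ v (T q) + m q) (hp : p ∈ stdSimplex ℝ K) :
    cav v p ≤ cav v (T p) + m p := by
  rw [← sub_le_iff_le_add]
  refine le_cav_of_forall_le hB fun g hg hvg ↦ sub_le_iff_le_add.2 ?_
  have hm : ConcaveOn ℝ (stdSimplex ℝ K) m :=
    ⟨convex_stdSimplex ℝ K, fun _ _ _ _ _ _ _ _ hab ↦ (Convex.combo_affine_apply hab).ge⟩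
  refine cav_le_of_concaveOn hp ((hg.comp_affineMap T).subset hT (convex_stdSimplex ℝ K)
    |>.add hm) fun q hq ↦ (hvT q hq).trans ?_
  exact add_le_add_left (hvg _ (hT hq)) _

theorem exists_mem_stdSimplex_sum_smul_eq [Nonempty K] {d : K → ℝ} (hd : 0 ≤ d) :
    ∃ r ∈ stdSimplex ℝ K, (∑ k, d k) • r = d := by
  classical
  by_cases h : ∑ k, d k = 0
  · have hd0 : d = 0 := funext fun k ↦
      (Finset.sum_eq_zero_iff_of_nonneg fun k _ ↦ hd k).1 h k (Finset.mem_univ k)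
    exact ⟨_, single_mem_stdSimplex ℝ (Classical.arbitrary K), by simp [hd0]⟩
  refine ⟨(∑ k, d k)⁻¹ • d, ⟨fun k ↦ ?_, ?_⟩, smul_inv_smul₀ h d⟩
  · exact smul_nonneg (inv_nonneg.2 (Finset.sum_nonneg fun k _ ↦ hd k)) (hd k)
  · simp [← Finset.mul_sum, h]

theorem sum_sub_inf_le_card_mul_dist (p p' : K → ℝ) :
    ∑ k, (p k - (p ⊓ p') k) ≤ Fintype.card K * dist p p' :=
  calc ∑ k, (p k - (p ⊓ p') k) ≤ ∑ _k : K, dist p p' := Finset.sum_le_sum fun k _ ↦ le_trans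
        (by rcases le_total (p k) (p' k) with h | h <;> simp [Real.dist_eq, h, le_abs_self])
        (dist_le_pi_dist p p' k)
    _ = Fintype.card K * dist p p' := by simp

/-- `T q` keeps the part `σ * q` of `q`, where `σ * p = p ⊓ p'`, and puts the remaining mass
`m q` on the point `r` of the simplex proportional to `p' - p ⊓ p'`; so `m p` is the total
variation distance between `p` and `p'`. -/
theorem exists_affineMap_transport (hp : p ∈ stdSimplex ℝ K) {p' : K → ℝ}
    (hp' : p' ∈ stdSimplex ℝ K) :
    ∃ (T : (K → ℝ) →ᵃ[ℝ] (K → ℝ)) (m : (K → ℝ) →ᵃ[ℝ] ℝ),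
      MapsTo T (stdSimplex ℝ K) (stdSimplex ℝ K) ∧ T p = p' ∧
      (∀ q ∈ stdSimplex ℝ K, dist q (T q) ≤ m q) ∧ m p ≤ Fintype.card K * dist p p' := by
  have : Nonempty K := by
    by_contra h
    simpa [not_nonempty_iff.1 h] using hp.2
  obtain ⟨σ, hσ0, hσ1, hσp⟩ := exists_mul_eq_of_le (le_inf hp.1 hp'.1) (inf_le_left (b := p'))
  obtain ⟨r, hr, hcr⟩ := exists_mem_stdSimplex_sum_smul_eq (d := p' - p ⊓ p')
    (sub_nonneg.2 inf_le_right)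
  let T : (K → ℝ) →ᵃ[ℝ] (K → ℝ) :=
    (LinearMap.mulLeft ℝ σ - (dotProductBilin ℝ ℝ σ).smulRight r).toAffineMap +
      AffineMap.const ℝ (K → ℝ) r
  let m : (K → ℝ) →ᵃ[ℝ] ℝ := AffineMap.const ℝ (K → ℝ) 1 - (dotProductBilin ℝ ℝ σ).toAffineMap
  have hT (x : K → ℝ) (k : K) : T x k = σ k * x k + m x * r k := by
    simp [T, m]; ring
  have hm (x : K → ℝ) : m x = 1 - ∑ k, σ k * x k := by simp [m, dotProduct]
  have hmq {q : K → ℝ} (hq : q ∈ stdSimplex ℝ K) : m q = ∑ k, (1 - σ k) * q k := by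
    simp [hm, sub_mul, hq.2]
  have hmq_le {q : K → ℝ} (hq : q ∈ stdSimplex ℝ K) (k : K) : (1 - σ k) * q k ≤ m q :=
    hmq hq ▸ Finset.single_le_sum (fun j _ ↦ mul_nonneg (sub_nonneg.2 (hσ1 j)) (hq.1 j))
      (Finset.mem_univ k)
  have hm0 {q : K → ℝ} (hq : q ∈ stdSimplex ℝ K) : 0 ≤ m q :=
    hmq hq ▸ Finset.sum_nonneg fun j _ ↦ mul_nonneg (sub_nonneg.2 (hσ1 j)) (hq.1 j)
  refine ⟨T, m, fun q hq ↦ ⟨fun k ↦ ?_, ?_⟩, funext fun k ↦ ?_, fun q hq ↦ ?_, ?_⟩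
  · rw [hT]
    exact add_nonneg (mul_nonneg (hσ0 k) (hq.1 k)) (mul_nonneg (hm0 hq) (hr.1 k))
  · simp only [hT, Finset.sum_add_distrib, ← Finset.mul_sum, hr.2, hm]
    ring
  · have h₁ := congrFun hcr k
    have h₂ := congrFun hσp k
    simp only [← congrFun hσp, Pi.mul_apply, Pi.sub_apply, Pi.smul_apply, smul_eq_mul,
      Finset.sum_sub_distrib, hp'.2] at h₁ h₂ ⊢
    rw [hT, hm]
    linarith
  · have hr1 (k : K) : r k ≤ 1 :=
      hr.2 ▸ Finset.single_le_sum (fun j _ ↦ hr.1 j) (Finset.mem_univ k)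
    refine (dist_pi_le_iff (hm0 hq)).2 fun k ↦ ?_
    rw [Real.dist_eq, hT, abs_le]
    have h₁ := hmq_le hq k
    have h₂ := mul_le_mul_of_nonneg_left (hr1 k) (hm0 hq)
    have h₃ := mul_nonneg (sub_nonneg.2 (hσ1 k)) (hq.1 k)
    have h₄ := mul_nonneg (hm0 hq) (hr.1 k)
    constructor <;> nlinarith
  · refine le_of_eq_of_le ?_ (sum_sub_inf_le_card_mul_dist p p')
    simp only [hm, ← congrFun hσp, Pi.mul_apply, Finset.sum_sub_distrib, hp.2]

theorem lipschitzOnWith_cav {L : NNReal} (hv : LipschitzOnWith L v (stdSimplex ℝ K)) :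
    LipschitzOnWith (L * Fintype.card K) (cav v) (stdSimplex ℝ K) := by
  obtain ⟨B, hB⟩ := (isCompact_stdSimplex ℝ K).exists_bound_of_continuousOn hv.continuousOn
  refine LipschitzOnWith.of_le_add_mul _ fun p hp p' hp' ↦ ?_
  obtain ⟨T, m, hT, hTp, hdist, hmp⟩ := exists_affineMap_transport hp hp'
  have hvT (q : K → ℝ) (hq : q ∈ stdSimplex ℝ K) : v q ≤ v (T q) + ((L : ℝ) • m) q :=
    (hv.le_add_mul hq (hT hq)).trans (by
      simp only [AffineMap.coe_smul, Pi.smul_apply, smul_eq_mul]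
      gcongr
      exact hdist q hq)
  calc cav v p ≤ cav v (T p) + ((L : ℝ) • m) p :=
        cav_le_cav_apply_add (fun q hq ↦ (Real.le_norm_self _).trans (hB q hq)) hT hvT hp
    _ ≤ cav v p' + (L * Fintype.card K : NNReal) * dist p p' := by
        rw [hTp, AffineMap.coe_smul, Pi.smul_apply, smul_eq_mul, NNReal.coe_mul,
          NNReal.coe_natCast, mul_assoc]
        gcongr

theorem exists_abs_cav_le {L : NNReal} (hv : LipschitzOnWith L v (stdSimplex ℝ K)) :
    ∃ C, ∀ x, |cav v x| ≤ C := by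
  obtain ⟨B, hB⟩ := (isCompact_stdSimplex ℝ K).exists_bound_of_continuousOn hv.continuousOn
  have hBu (q : K → ℝ) (hq : q ∈ stdSimplex ℝ K) : v q ≤ B := (Real.le_norm_self _).trans (hB q hq)
  refine ⟨max B 0, fun x ↦ ?_⟩
  by_cases hx : x ∈ stdSimplex ℝ K
  · have hvx : -B ≤ v x := (abs_le.1 (hB x hx)).1
    exact abs_le.2 ⟨by linarith [le_max_left B 0, le_cav hBu hx],
      (cav_le hBu hx).trans (le_max_left _ _)⟩
  · simp [cav_of_notMem hBu hx]

theorem measurable_cav {L : NNReal} (hv : LipschitzOnWith L v (stdSimplex ℝ K)) :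
    Measurable (cav v) := by
  classical
  obtain ⟨B, hB⟩ := (isCompact_stdSimplex ℝ K).exists_bound_of_continuousOn hv.continuousOn
  have hcav : (stdSimplex ℝ K).piecewise (cav v) 0 = cav v := funext fun x ↦ by
    by_cases hx : x ∈ stdSimplex ℝ K
    · simp [hx]
    · simp [hx, cav_of_notMem (fun q hq ↦ (Real.le_norm_self _).trans (hB q hq)) hx]
  rw [← hcav]
  exact (lipschitzOnWith_cav hv).continuousOn.measurable_piecewise continuousOn_const
    (isClosed_stdSimplex ℝ K).measurableSet

section Integral

variable {Ω : Type*} [MeasurableSpace Ω] {μ : Measure Ω} {L : NNReal}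

theorem integrable_cav_comp [IsFiniteMeasure μ] (hv : LipschitzOnWith L v (stdSimplex ℝ K))
    {f : Ω → K → ℝ} (hf : AEMeasurable f μ) : Integrable (fun ω ↦ cav v (f ω)) μ := by
  obtain ⟨C, hC⟩ := exists_abs_cav_le hv
  exact .of_bound ((measurable_cav hv).comp_aemeasurable hf).aestronglyMeasurable C
    (ae_of_all _ fun ω ↦ hC (f ω))

theorem integral_cav_comp_le [IsProbabilityMeasure μ] (hv : LipschitzOnWith L v (stdSimplex ℝ K))
    {f : Ω → K → ℝ} (hf : Integrable f μ) (hfΔ : ∀ᵐ ω ∂μ, f ω ∈ stdSimplex ℝ K) :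
    ∫ ω, cav v (f ω) ∂μ ≤ cav v (∫ ω, f ω ∂μ) := by
  obtain ⟨B, hB⟩ := (isCompact_stdSimplex ℝ K).exists_bound_of_continuousOn hv.continuousOn
  exact (concaveOn_cav fun q hq ↦ (Real.le_norm_self _).trans (hB q hq)).le_map_integral
    (lipschitzOnWith_cav hv).continuousOn (isClosed_stdSimplex ℝ K) hfΔ hf
    (integrable_cav_comp hv hf.aemeasurable)

end Integral

end Concavification

noncomputable section Marginals

variable (KA KB : Type*) [Fintype KA] [Fintype KB]

def margACLM : (KA × KB → ℝ) →L[ℝ] (KA → ℝ) :=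
  LinearMap.toContinuousLinearMap
    { toFun := margA
      map_add' := fun x y ↦ funext fun a ↦ by simp [margA, Finset.sum_add_distrib]
      map_smul' := fun c x ↦ funext fun a ↦ by simp [margA, Finset.mul_sum] }

def margBCLM : (KA × KB → ℝ) →L[ℝ] (KB → ℝ) :=
  LinearMap.toContinuousLinearMap
    { toFun := margB
      map_add' := fun x y ↦ funext fun b ↦ by simp [margB, Finset.sum_add_distrib]
      map_smul' := fun c x ↦ funext fun b ↦ by simp [margB, Finset.mul_sum] }

variable {KA KB} {q : KA × KB → ℝ}

theorem margA_mem_stdSimplex (hq : q ∈ stdSimplex ℝ (KA × KB)) : margA q ∈ stdSimplex ℝ KA :=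
  ⟨fun a ↦ Finset.sum_nonneg fun b _ ↦ hq.1 (a, b), by
    rw [← hq.2, Fintype.sum_prod_type]; rfl⟩

theorem margB_mem_stdSimplex (hq : q ∈ stdSimplex ℝ (KA × KB)) : margB q ∈ stdSimplex ℝ KB :=
  ⟨fun b ↦ Finset.sum_nonneg fun a _ ↦ hq.1 (a, b), by
    rw [← hq.2, Fintype.sum_prod_type_right]; rfl⟩

end Marginals

namespace MeasureTheory

variable {Ω ι E : Type*} {mΩ : MeasurableSpace Ω} {μ : Measure Ω}
  [NormedAddCommGroup E] [NormedSpace ℝ E] [CompleteSpace E]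

theorem Martingale.comp_continuousLinearMap [Preorder ι] {ℱ : Filtration ι mΩ} {f : ι → Ω → E}
    {F : Type*} [NormedAddCommGroup F] [NormedSpace ℝ F] [CompleteSpace F]
    (hf : Martingale f ℱ μ) (T : E →L[ℝ] F) : Martingale (fun t ω ↦ T (f t ω)) ℱ μ :=
  ⟨fun t ↦ T.continuous.comp_stronglyMeasurable (hf.stronglyAdapted t), fun _ j hij ↦
    (T.comp_condExp_comm (hf.integrable j)).symm.trans ((hf.condExp_ae_eq hij).fun_comp T)⟩

theorem Martingale.integral_eq [LinearOrder ι] [IsFiniteMeasure μ] {ℱ : Filtration ι mΩ}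
    {f : ι → Ω → E} (hf : Martingale f ℱ μ) (i j : ι) : ∫ ω, f i ω ∂μ = ∫ ω, f j ω ∂μ := by
  wlog hij : i ≤ j generalizing i j
  · exact (this j i (le_of_not_ge hij)).symm
  calc ∫ ω, f i ω ∂μ = ∫ ω, (μ[f j | ℱ i]) ω ∂μ := (integral_congr_ae (hf.condExp_ae_eq hij)).symm
    _ = ∫ ω, f j ω ∂μ := integral_condExp (ℱ.le i)

theorem StronglyAdapted.cav_comp [Preorder ι] {K : Type*} [Fintype K] {v : (K → ℝ) → ℝ}
    {L : NNReal} (hv : LipschitzOnWith L v (stdSimplex ℝ K)) {ℱ : Filtration ι mΩ}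
    {q : ι → Ω → K → ℝ} (hq : StronglyAdapted ℱ q) :
    StronglyAdapted ℱ fun t ω ↦ cav v (q t ω) :=
  fun t ↦ ((measurable_cav hv).comp (hq t).measurable).stronglyMeasurable

theorem Martingale.integral_cav_le [LinearOrder ι] [IsProbabilityMeasure μ]
    {K : Type*} [Fintype K] {v : (K → ℝ) → ℝ} {L : NNReal}
    (hv : LipschitzOnWith L v (stdSimplex ℝ K)) {ℱ : Filtration ι mΩ} {q : ι → Ω → K → ℝ}
    (hq : Martingale q ℱ μ) {t : ι} (hqΔ : ∀ᵐ ω ∂μ, q t ω ∈ stdSimplex ℝ K) (s : ι) :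
    ∫ ω, cav v (q t ω) ∂μ ≤ cav v (∫ ω, q s ω ∂μ) := by
  rw [hq.integral_eq s t]
  exact integral_cav_comp_le hv (hq.integrable t) hqΔ

theorem ae_eq_and_ae_eq_of_integral_add_le {f₁ g₁ f₂ g₂ : Ω → ℝ} (hf₁ : Integrable f₁ μ)
    (hg₁ : Integrable g₁ μ) (hf₂ : Integrable f₂ μ) (hg₂ : Integrable g₂ μ)
    (h₁ : f₁ ≤ᵐ[μ] g₁) (h₂ : f₂ ≤ᵐ[μ] g₂)
    (h : ∫ ω, g₁ ω ∂μ + ∫ ω, g₂ ω ∂μ ≤ ∫ ω, f₁ ω ∂μ + ∫ ω, f₂ ω ∂μ) :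
    f₁ =ᵐ[μ] g₁ ∧ f₂ =ᵐ[μ] g₂ := by
  have i₁ := integral_mono_ae hf₁ hg₁ h₁
  have i₂ := integral_mono_ae hf₂ hg₂ h₂
  exact ⟨(integral_eq_iff_of_ae_le hf₁ hg₁ h₁).1 (by linarith),
    (integral_eq_iff_of_ae_le hf₂ hg₂ h₂).1 (by linarith)⟩

end MeasureTheory

theorem stmt_6_general {KA KB : Type*} [Fintype KA] [Fintype KB]
    {Ω : Type*} {mΩ : MeasurableSpace Ω} {μ : Measure Ω} [IsProbabilityMeasure μ]
    (ℱ : Filtration ℕ mΩ)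
    (vA : (KA → ℝ) → ℝ) (vB : (KB → ℝ) → ℝ) (CA CB : NNReal)
    (hvA : LipschitzOnWith CA vA (stdSimplex ℝ KA))
    (hvB : LipschitzOnWith CB vB (stdSimplex ℝ KB))
    (p : ℕ → Ω → (KA × KB → ℝ)) (hmart : Martingale p ℱ μ)
    (hval : ∀ t, ∀ᵐ ω ∂μ, p t ω ∈ stdSimplex ℝ (KA × KB))
    (p0 : KA × KB → ℝ)
    (hinit : ∀ᵐ ω ∂μ, p 1 ω = p0)
    (βA βB : ℕ → Ω → ℝ)
    (hβA : Martingale βA ℱ μ) (hβB : Martingale βB ℱ μ)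
    (hAle : ∀ t, ∀ᵐ ω ∂μ, βA t ω ≤ cav vA (margA (p t ω)))
    (hBle : ∀ t, ∀ᵐ ω ∂μ, βB t ω ≤ cav vB (margB (p t ω)))
    (hsum : ∀ᵐ ω ∂μ, βA 1 ω + βB 1 ω = cav vA (margA p0) + cav vB (margB p0)) :
    Martingale (fun t ω => cav vA (margA (p t ω))) ℱ μ ∧
    Martingale (fun t ω => cav vB (margB (p t ω))) ℱ μ := by
  have hqA : Martingale (fun t ω ↦ margA (p t ω)) ℱ μ :=
    hmart.comp_continuousLinearMap (margACLM KA KB)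
  have hqB : Martingale (fun t ω ↦ margB (p t ω)) ℱ μ :=
    hmart.comp_continuousLinearMap (margBCLM KA KB)
  have hcavA (t : ℕ) : ∫ ω, cav vA (margA (p t ω)) ∂μ ≤ cav vA (margA p0) := by
    refine (hqA.integral_cav_le hvA ((hval t).mono fun _ ↦ margA_mem_stdSimplex) 1).trans_eq ?_
    rw [integral_congr_ae (hinit.mono fun _ h ↦ congrArg margA h), integral_const]
    simp
  have hcavB (t : ℕ) : ∫ ω, cav vB (margB (p t ω)) ∂μ ≤ cav vB (margB p0) := by
    refine (hqB.integral_cav_le hvB ((hval t).mono fun _ ↦ margB_mem_stdSimplex) 1).trans_eq ?_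
    rw [integral_congr_ae (hinit.mono fun _ h ↦ congrArg margB h), integral_const]
    simp
  have hβ (t : ℕ) : ∫ ω, βA t ω ∂μ + ∫ ω, βB t ω ∂μ = cav vA (margA p0) + cav vB (margB p0) := by
    rw [hβA.integral_eq t 1, hβB.integral_eq t 1, ← integral_add (hβA.integrable 1)
      (hβB.integrable 1), integral_congr_ae hsum]
    simp
  have heq (t : ℕ) := ae_eq_and_ae_eq_of_integral_add_le (hβA.integrable t)
    (integrable_cav_comp hvA (hqA.integrable t).aemeasurable) (hβB.integrable t)
    (integrable_cav_comp hvB (hqB.integrable t).aemeasurable) (hAle t) (hBle t)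
    (by linarith [hcavA t, hcavB t, hβ t])
  exact ⟨hβA.congr (hqA.stronglyAdapted.cav_comp hvA) fun t ↦ (heq t).1,
    hβB.congr (hqB.stronglyAdapted.cav_comp hvB) fun t ↦ (heq t).2⟩

/-- if `(p_t)` is a `Δ(K_A×K_B)`-valued martingale with `p₁ = p⁰` a.s.,
and `(β_{A,t})`, `(β_{B,t})` are real martingales with `β_{ℓ,t} ≤ Cav(v_ℓ)((p_t)_ℓ)` a.s.
and `β_{A,1} + β_{B,1} = Cav(v_A)(p⁰_A) + Cav(v_B)(p⁰_B)` a.s., then each process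
`Cav(v_ℓ)((p_t)_ℓ)` is a martingale. -/
theorem stmt_6 {KA KB : Type*} [Fintype KA] [Fintype KB]
    {Ω : Type*} {mΩ : MeasurableSpace Ω} {μ : Measure Ω} [IsProbabilityMeasure μ]
    (ℱ : Filtration ℕ mΩ)
    (vA : (KA → ℝ) → ℝ) (vB : (KB → ℝ) → ℝ) (CA CB : NNReal)
    (hvA : LipschitzOnWith CA vA (stdSimplex ℝ KA))
    (hvB : LipschitzOnWith CB vB (stdSimplex ℝ KB))
    (p : ℕ → Ω → (KA × KB → ℝ)) (hmart : Martingale p ℱ μ)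
    (hval : ∀ t, ∀ᵐ ω ∂μ, p t ω ∈ stdSimplex ℝ (KA × KB))
    (p0 : KA × KB → ℝ) (hp0 : p0 ∈ stdSimplex ℝ (KA × KB))
    (hinit : ∀ᵐ ω ∂μ, p 1 ω = p0)
    (βA βB : ℕ → Ω → ℝ)
    (hβA : Martingale βA ℱ μ) (hβB : Martingale βB ℱ μ)
    (hAle : ∀ t, ∀ᵐ ω ∂μ, βA t ω ≤ cav vA (margA (p t ω)))
    (hBle : ∀ t, ∀ᵐ ω ∂μ, βB t ω ≤ cav vB (margB (p t ω)))
    (hsum : ∀ᵐ ω ∂μ, βA 1 ω + βB 1 ω = cav vA (margA p0) + cav vB (margB p0)) :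
    Martingale (fun t ω => cav vA (margA (p t ω))) ℱ μ ∧
    Martingale (fun t ω => cav vB (margB (p t ω))) ℱ μ :=
  stmt_6_general ℱ vA vB CA CB hvA hvB p hmart hval p0 hinit βA βB hβA hβB hAle hBle hsum
end

section
/- Consider the game with state set K = {1,2} and payoff matrices M¹ = A¹ = [[1,1],[−1,−1]], M² = A² = [[−1,−1],[1,1]]. Writing q for the probability of state 1, the non-revealing value function satisfies v(q) = |2q − 1| for all q ∈ [0,1] and Cav(v)(q) = 1 for all q ∈ [0,1]. Moreover, the game does NOT satisfy property NR at p⁰ = (1/2, 1/2): there exist no p ∈ Δ(K) and φ ∈ ℝ^K satisfying conditions (1)–(3) of property NR at p⁰. -/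
open scoped BigOperators
open Finset

noncomputable section

/-- The game of Example 3.2: `M¹ = [[1,1],[−1,−1]]`, `M² = [[−1,−1],[1,1]]`. -/
def Mex15 : Fin (1 + 1) → Fin 2 → Fin 2 → ℝ :=
  ![fun i j => !![(1:ℝ), 1; -1, -1] i j, fun i j => !![(-1:ℝ), -1; 1, 1] i j]

end

/-!
The payoff `s M(q) t = (q¹ - q²)(s₁ - s₂)` does not depend on player 2's move, so
`v(q) = |q¹ - q²|`; it equals `1` at both vertices and is at most `1`, hence `Cav v ≡ 1`.
If `(p, φ)` witnessed NR at `p⁰`, then `v(p) = 1` forces `p ≠ p⁰`, and the linear `φ`, equal to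
`1` at both `p` and `p⁰`, is `(1, 1)`, so `φS = 0`. But `v ∘ T = |1 - 2x|` is `C¹` near `T⁻¹(p)`,
away from the kink, so its Clarke gradient there is the single nonzero slope `±2`.
-/

section MatrixGame

variable {I J : Type*} [Fintype I] [Fintype J]

lemma iSup_stdSimplex_sum_mul [Nonempty I] (a : I → ℝ) :
    ⨆ s : stdSimplex ℝ I, ∑ i, (s : I → ℝ) i * a i = ⨆ i, a i := by
  classical
  have hle : ∀ s : stdSimplex ℝ I, ∑ i, (s : I → ℝ) i * a i ≤ ⨆ i, a i := fun s => calc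
    ∑ i, (s : I → ℝ) i * a i ≤ ∑ i, (s : I → ℝ) i * ⨆ i, a i :=
      Finset.sum_le_sum fun i _ => mul_le_mul_of_nonneg_left
        (le_ciSup (Finite.bddAbove_range a) i) (stdSimplex.zero_le s i)
    _ = ⨆ i, a i := by rw [← Finset.sum_mul, stdSimplex.sum_eq_one, one_mul]
  refine le_antisymm (ciSup_le hle) (ciSup_le fun i => ?_)
  refine le_ciSup_of_le ⟨_, Set.forall_mem_range.2 hle⟩ (stdSimplex.vertex i) ?_
  simp [Pi.single_apply]

lemma matrixValue_of_indep_col [Nonempty I] [Nonempty J] (a : I → ℝ) :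
    matrixValue (fun i (_ : J) => a i) = ⨆ i, a i := by
  have hpay : ∀ (s : stdSimplex ℝ I) (t : stdSimplex ℝ J),
      ∑ i, ∑ j, (s : I → ℝ) i * a i * (t : J → ℝ) j = ∑ i, (s : I → ℝ) i * a i := by
    intro s t
    simp only [← Finset.mul_sum, stdSimplex.sum_eq_one, mul_one]
  simp only [matrixValue, hpay, iSup_stdSimplex_sum_mul, ciInf_const]

end MatrixGame

section Concavification

variable {K : Type*} [Fintype K] [DecidableEq K] {v g : (K → ℝ) → ℝ} {p : K → ℝ}

lemma sum_mul_vertex_le_of_concave_majorant (hg : ConcaveOn ℝ (stdSimplex ℝ K) g)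
    (hvg : ∀ q ∈ stdSimplex ℝ K, v q ≤ g q) (hp : p ∈ stdSimplex ℝ K) :
    ∑ k, p k * v (Pi.single k 1) ≤ g p := by
  have hp_eq : ∑ k, p k • (Pi.single k 1 : K → ℝ) = p := by
    ext j; simp [Finset.sum_apply, Pi.single_apply]
  calc ∑ k, p k * v (Pi.single k 1)
      ≤ ∑ k, p k • g (Pi.single k 1) := Finset.sum_le_sum fun k _ =>
        mul_le_mul_of_nonneg_left (hvg _ (single_mem_stdSimplex ℝ k)) (hp.1 k)
    _ ≤ g (∑ k, p k • Pi.single k 1) :=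
        hg.le_map_sum (fun k _ => hp.1 k) hp.2 fun k _ => single_mem_stdSimplex ℝ k
    _ = g p := by rw [hp_eq]

lemma cav_eq_of_concave_majorant (hg : ConcaveOn ℝ (stdSimplex ℝ K) g)
    (hvg : ∀ q ∈ stdSimplex ℝ K, v q ≤ g q) (hp : p ∈ stdSimplex ℝ K)
    (hgp : g p = ∑ k, p k * v (Pi.single k 1)) : cav v p = g p := by
  have hlower : ∀ y ∈ { y : ℝ | ∃ g : (K → ℝ) → ℝ, ConcaveOn ℝ (stdSimplex ℝ K) g ∧
      (∀ q ∈ stdSimplex ℝ K, v q ≤ g q) ∧ y = g p }, g p ≤ y := by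
    rintro _ ⟨g', hg', hvg', rfl⟩
    exact hgp ▸ sum_mul_vertex_le_of_concave_majorant hg' hvg' hp
  exact le_antisymm (csInf_le ⟨_, hlower⟩ ⟨g, hg, hvg, rfl⟩) (le_csInf ⟨_, g, hg, hvg, rfl⟩ hlower)

end Concavification

section ClarkeGradient

variable {n : ℕ} {f : (Fin n → ℝ) → ℝ} {x : Fin n → ℝ}

lemma ContDiffAt.continuousAt_grad (hf : ContDiffAt ℝ 1 f x) : ContinuousAt (grad f) x :=
  continuousAt_pi.2 fun _ => (hf.continuousAt_fderiv one_ne_zero).clm_apply continuousAt_const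

lemma ContDiffAt.clarkeGrad_subset (hf : ContDiffAt ℝ 1 f x) : clarkeGrad f x ⊆ {grad f x} := by
  refine convexHull_min ?_ (convex_singleton _)
  rintro L ⟨u, -, hu, hL⟩
  exact tendsto_nhds_unique hL (hf.continuousAt_grad.tendsto.comp hu)

end ClarkeGradient

lemma ve_Mex15 (q : Fin 2 → ℝ) : ve Mex15 q = |q 0 - q 1| := by
  have hpay : (fun i j => ∑ k, q k * Mex15 k i j) =
      fun i (_ : Fin 2) => ![q 0 - q 1, -(q 0 - q 1)] i := by
    ext i j
    fin_cases i <;> fin_cases j <;>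
      simp only [Mex15, Fin.sum_univ_two, Matrix.of_apply, Matrix.cons_val', Matrix.cons_val_zero,
        Matrix.cons_val_one, Matrix.cons_val_fin_one, Fin.zero_eta, Fin.mk_one] <;> ring
  rw [ve, hpay, matrixValue_of_indep_col]
  exact eq_of_forall_ge_iff fun c => by
    simp only [ciSup_le_iff (Finite.bddAbove_range _), Fin.forall_fin_two, abs_le,
      Matrix.cons_val_zero, Matrix.cons_val_one]
    constructor <;> rintro ⟨h₀, h₁⟩ <;> constructor <;> linarith

lemma ve_Mex15_comp_Tmap : (fun x => ve Mex15 (Tmap 1 x)) = fun x => |1 - 2 * x 0| := by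
  ext x
  simp only [ve_Mex15, Tmap, Fin.sum_univ_one, Fin.cons_zero, Fin.cons_one]
  congr 1
  ring

lemma cav_ve_Mex15 {p : Fin 2 → ℝ} (hp : p ∈ stdSimplex ℝ (Fin 2)) : cav (ve Mex15) p = 1 := by
  refine cav_eq_of_concave_majorant (concaveOn_const 1 (convex_stdSimplex ℝ _)) (fun q hq => ?_) hp ?_
  · rw [ve_Mex15, abs_le]
    have : q 0 + q 1 = 1 := stdSimplex.add_eq_one ⟨q, hq⟩
    constructor <;> linarith [hq.1 0, hq.1 1]
  · have hp₁ : p 0 + p 1 = 1 := stdSimplex.add_eq_one ⟨p, hp⟩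
    simpa [ve_Mex15, Fin.sum_univ_two] using hp₁.symm

lemma zero_notMem_clarkeGrad_ve_Mex15 {y : Fin 1 → ℝ} (hy : 1 - 2 * y 0 ≠ 0) :
    0 ∉ clarkeGrad (fun x => ve Mex15 (Tmap 1 x)) y := by
  have hderiv := (hasDerivAt_abs hy).comp_hasFDerivAt y
    (((hasFDerivAt_apply (𝕜 := ℝ) 0 y).const_mul (2 : ℝ)).const_sub (1 : ℝ))
  have hfderiv : fderiv ℝ (fun x : Fin 1 → ℝ => |1 - 2 * x 0|) y = _ := hderiv.fderiv
  have hdiff : ContDiffAt ℝ 1 (fun x : Fin 1 → ℝ => |1 - 2 * x 0|) y :=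
    ContDiffAt.abs (by fun_prop) hy
  rw [ve_Mex15_comp_Tmap]
  intro h
  have := congrFun (hdiff.clarkeGrad_subset h) 0
  rw [grad, hfderiv] at this
  rcases hy.lt_or_gt with hneg | hpos
  · simp [sign_neg hneg] at this
  · simp [sign_pos hpos] at this

lemma not_propNR_Mex15 : ¬ propNR Mex15 ![1/2, 1/2] := by
  rintro ⟨p, hp, φ, ⟨hcav, hvφ, hcav₀⟩, hclarke, -⟩
  have hp₁ : p 0 + p 1 = 1 := stdSimplex.add_eq_one ⟨p, hp⟩
  rw [cav_ve_Mex15 hp, ve_Mex15] at hcav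
  rw [ve_Mex15, ← hcav, Fin.sum_univ_two] at hvφ
  rw [cav_ve_Mex15 ⟨Fin.forall_fin_two.2 ⟨by norm_num, by norm_num⟩, by norm_num⟩, Fin.sum_univ_two,
    Matrix.cons_val_zero, Matrix.cons_val_one, Matrix.cons_val_zero] at hcav₀
  have hp_ne : p 0 - p 1 ≠ 0 := fun h => by simp [h] at hcav
  -- the linear `φ` agrees with `Cav v ≡ 1` at the two distinct points `p`, `p⁰` of the line `Δ(K)`
  have hφ : φ 1 - φ 0 = 0 := by
    have : (φ 0 - φ 1) * (p 0 - p 1) = 0 := by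
      linear_combination -2 * hvφ + 2 * hcav₀ - (φ 0 + φ 1) * hp₁
    linarith [(mul_eq_zero.1 this).resolve_right hp_ne]
  refine zero_notMem_clarkeGrad_ve_Mex15 (y := Tinv p) ?_ ?_
  · exact fun h => hp_ne (by simp only [Tinv, Fin.succ_zero_eq_one] at h; linarith)
  · convert hclarke
    ext i
    fin_cases i
    simp [rowS, hφ]

/-- for the game `Mex15`, writing `q` for the probability of state 1,
`v(q) = |2q − 1|` and `Cav(v)(q) = 1` on `[0,1]`; moreover the game does NOT satisfy
property NR at `p⁰ = (1/2, 1/2)`. -/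
theorem stmt_15 :
    (∀ q ∈ Set.Icc (0:ℝ) 1, ve Mex15 ![q, 1 - q] = |2 * q - 1|) ∧
    (∀ q ∈ Set.Icc (0:ℝ) 1, cav (ve Mex15) ![q, 1 - q] = 1) ∧
    ¬ propNR Mex15 ![1/2, 1/2] := by
  refine ⟨fun q _ => ?_, fun q hq => cav_ve_Mex15 ?_, not_propNR_Mex15⟩
  · rw [ve_Mex15, Matrix.cons_val_zero, Matrix.cons_val_one, Matrix.cons_val_zero]
    congr 1
    ring
  · exact ⟨Fin.forall_fin_two.2 ⟨hq.1, sub_nonneg.2 hq.2⟩, by simp⟩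
end

section
/- Let ε > 0 and consider the game with state set K = {1,2} and payoff matrices M¹ = B¹ = [[−ε,−ε],[ε,ε]], M² = B² = [[ε,ε],[−ε,−ε]], and prior p⁰ = (1/2, 1/2). Then NR(p⁰) = ∅: there is no φ ∈ ℝ² such that φ·q ≥ v(q) for all q ∈ Δ(K), φ·p⁰ = Cav(v)(p⁰), and φ ∈ F. (Indeed, the first two conditions force φ = (ε,ε), while F = conv{(ε,−ε),(−ε,ε)} does not contain (ε,ε).) -/
open scoped BigOperators
open Finset

noncomputable section

/-- The game with `B¹ = [[−ε,−ε],[ε,ε]]` and `B² = [[ε,ε],[−ε,−ε]]`. -/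
def Meps (ε : ℝ) : Fin 2 → Fin 2 → Fin 2 → ℝ :=
  ![fun i j => !![-ε, -ε; ε, ε] i j, fun i j => !![ε, ε; -ε, -ε] i j]

end


section Aux

lemma mem_e1 : ![(1:ℝ),0] ∈ stdSimplex ℝ (Fin 2) := by
  constructor
  · intro i; fin_cases i <;> norm_num
  · simp [Fin.sum_univ_two]

lemma mem_e2 : ![(0:ℝ),1] ∈ stdSimplex ℝ (Fin 2) := by
  constructor
  · intro i; fin_cases i <;> norm_num
  · simp [Fin.sum_univ_two]

lemma payoff_le {ε : ℝ} (a : Fin 2 → Fin 2 → ℝ)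
    (ha : ∀ i j, |a i j| ≤ ε) {s t : Fin 2 → ℝ}
    (hs : s ∈ stdSimplex ℝ (Fin 2)) (ht : t ∈ stdSimplex ℝ (Fin 2)) :
    ∑ i, ∑ j, s i * a i j * t j ≤ ε := by
  have key : ∀ i j, s i * a i j * t j ≤ s i * ε * t j := by
    intro i j
    exact mul_le_mul_of_nonneg_right
      (mul_le_mul_of_nonneg_left (abs_le.1 (ha i j)).2 (hs.1 i)) (ht.1 j)
  have hs2 := hs.2; have ht2 := ht.2
  simp only [Fin.sum_univ_two] at hs2 ht2 ⊢
  have hprod : s 0 * ε * t 0 + s 0 * ε * t 1 + s 1 * ε * t 0 + s 1 * ε * t 1 = ε := by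
    linear_combination ε * (t 0 + t 1) * hs2 + ε * ht2
  linarith [key 0 0, key 0 1, key 1 0, key 1 1]

lemma payoff_ge {ε : ℝ} (a : Fin 2 → Fin 2 → ℝ)
    (ha : ∀ i j, |a i j| ≤ ε) {s t : Fin 2 → ℝ}
    (hs : s ∈ stdSimplex ℝ (Fin 2)) (ht : t ∈ stdSimplex ℝ (Fin 2)) :
    -ε ≤ ∑ i, ∑ j, s i * a i j * t j := by
  have key : ∀ i j, s i * -ε * t j ≤ s i * a i j * t j := by
    intro i j
    exact mul_le_mul_of_nonneg_right
      (mul_le_mul_of_nonneg_left (abs_le.1 (ha i j)).1 (hs.1 i)) (ht.1 j)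
  have hs2 := hs.2; have ht2 := ht.2
  simp only [Fin.sum_univ_two] at hs2 ht2 ⊢
  have hprod : s 0 * -ε * t 0 + s 0 * -ε * t 1 + s 1 * -ε * t 0 + s 1 * -ε * t 1 = -ε := by
    linear_combination -ε * (t 0 + t 1) * hs2 + -ε * ht2
  linarith [key 0 0, key 0 1, key 1 0, key 1 1]

instance : Nonempty (stdSimplex ℝ (Fin 2)) := ⟨⟨![1,0], mem_e1⟩⟩

lemma matrixValue_le {ε : ℝ} (a : Fin 2 → Fin 2 → ℝ)
    (ha : ∀ i j, |a i j| ≤ ε) : matrixValue a ≤ ε := by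
  have hbdd : ∀ t : stdSimplex ℝ (Fin 2),
      BddAbove (Set.range fun s : stdSimplex ℝ (Fin 2) =>
        ∑ i, ∑ j, (s : Fin 2 → ℝ) i * a i j * (t : Fin 2 → ℝ) j) := by
    intro t
    exact ⟨ε, by rintro _ ⟨s, rfl⟩; exact payoff_le a ha s.2 t.2⟩
  refine ciInf_le_of_le ?_ ⟨![1,0], mem_e1⟩ ?_
  · refine ⟨-ε, ?_⟩
    rintro _ ⟨t, rfl⟩
    exact le_ciSup_of_le (hbdd t) ⟨![1,0], mem_e1⟩ (payoff_ge a ha mem_e1 t.2)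
  · exact ciSup_le fun s => payoff_le a ha s.2 mem_e1

lemma matrixValue_ge {ε : ℝ} (a : Fin 2 → Fin 2 → ℝ)
    (ha : ∀ i j, |a i j| ≤ ε) (s0 : Fin 2 → ℝ) (hs0 : s0 ∈ stdSimplex ℝ (Fin 2))
    (hval : ∀ t : Fin 2 → ℝ, t ∈ stdSimplex ℝ (Fin 2) →
      ε ≤ ∑ i, ∑ j, s0 i * a i j * t j) : ε ≤ matrixValue a := by
  refine le_ciInf fun t => ?_
  refine le_ciSup_of_le ⟨ε, ?_⟩ ⟨s0, hs0⟩ (hval t t.2)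
  rintro _ ⟨s, rfl⟩; exact payoff_le a ha s.2 t.2

lemma meps_abs {ε : ℝ} (hε : 0 < ε) {q : Fin 2 → ℝ} (hq : q ∈ stdSimplex ℝ (Fin 2)) :
    ∀ i j, |∑ k, q k * Meps ε k i j| ≤ ε := by
  intro i j
  have h0 := hq.1 0; have h1 := hq.1 1
  have h2 := hq.2
  simp only [Fin.sum_univ_two] at h2 ⊢
  fin_cases i <;> fin_cases j <;>
    simp [Meps, Matrix.cons_val_zero, Matrix.cons_val_one] <;>
    rw [abs_le] <;> constructor <;> nlinarith

lemma ve_le {ε : ℝ} (hε : 0 < ε) {q : Fin 2 → ℝ} (hq : q ∈ stdSimplex ℝ (Fin 2)) :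
    ve (Meps ε) q ≤ ε :=
  matrixValue_le _ (meps_abs hε hq)

lemma ve_e1 {ε : ℝ} (hε : 0 < ε) : ε ≤ ve (Meps ε) ![1,0] := by
  refine matrixValue_ge _ (meps_abs hε mem_e1) ![0,1] mem_e2 ?_
  intro t ht
  have h2 := ht.2
  simp only [Fin.sum_univ_two] at h2 ⊢
  simp [Meps]
  have : ε * t 0 + ε * t 1 = ε := by linear_combination ε * h2
  linarith

lemma ve_e2 {ε : ℝ} (hε : 0 < ε) : ε ≤ ve (Meps ε) ![0,1] := by
  refine matrixValue_ge _ (meps_abs hε mem_e2) ![1,0] mem_e1 ?_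
  intro t ht
  have h2 := ht.2
  simp only [Fin.sum_univ_two] at h2 ⊢
  simp [Meps]
  have : ε * t 0 + ε * t 1 = ε := by linear_combination ε * h2
  linarith

lemma mem_half : ![(1:ℝ)/2, 1/2] ∈ stdSimplex ℝ (Fin 2) := by
  constructor
  · intro i; fin_cases i <;> norm_num
  · simp [Fin.sum_univ_two]; norm_num

lemma cav_ge {ε : ℝ} (hε : 0 < ε) : ε ≤ cav (ve (Meps ε)) ![1/2, 1/2] := by
  refine le_csInf ⟨ε, fun _ => ε, concaveOn_const ε (convex_stdSimplex ℝ (Fin 2)),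
    fun q hq => ve_le hε hq, rfl⟩ ?_
  rintro y ⟨g, hg, hmaj, rfl⟩
  have h1 : ε ≤ g ![1,0] := (ve_e1 hε).trans (hmaj _ mem_e1)
  have h2 : ε ≤ g ![0,1] := (ve_e2 hε).trans (hmaj _ mem_e2)
  have hcomb : (1/2 : ℝ) • ![(1:ℝ),0] + (1/2 : ℝ) • ![(0:ℝ),1] = ![(1:ℝ)/2, 1/2] := by
    funext i; fin_cases i <;> simp
  have := hg.2 mem_e1 mem_e2 (by norm_num : (0:ℝ) ≤ 1/2) (by norm_num : (0:ℝ) ≤ 1/2)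
    (by norm_num)
  rw [hcomb] at this
  simp only [smul_eq_mul] at this
  linarith

lemma fset_sum {ε : ℝ} {φ : Fin 2 → ℝ} (h : φ ∈ Fset (Meps ε)) : φ 0 + φ 1 = 0 := by
  have hsub : Fset (Meps ε) ⊆ {w : Fin 2 → ℝ | w 0 + w 1 = 0} := by
    refine convexHull_min ?_ ?_
    · rintro w ⟨i, j, rfl⟩
      fin_cases i <;> fin_cases j <;> simp [Meps]
    · intro x hx y hy a b ha hb hab
      simp only [Set.mem_setOf_eq] at hx hy ⊢
      simp only [Pi.add_apply, Pi.smul_apply, smul_eq_mul]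
      linear_combination a * hx + b * hy
  exact hsub h

end Aux

/-- for every `ε > 0`, `NR(p⁰) = ∅` for the game `Meps ε` with prior
`p⁰ = (1/2, 1/2)`. -/
theorem stmt_17 (ε : ℝ) (hε : 0 < ε) :
    NRset (Meps ε) ![1/2, 1/2] = (∅ : Set (Fin 2 → ℝ)) := by
  ext φ
  simp only [Set.mem_empty_iff_false, iff_false]
  rintro ⟨h1, h2, h3⟩
  have hsum := fset_sum h3
  have hcav := cav_ge hε
  rw [← h2] at hcav
  simp only [Fin.sum_univ_two] at hcav
  norm_num at hcav
  linarith
end
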